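/- Let h : Ω → ℝ be harmonic on a simply connected domain Ω ⊂ ℂ and L, P : Ω → ℂ holomorphic with (h_z)² = L_z P_z and |L_z| − |P_z| ≠ 0 on Ω. Then ψ(z) = (Re(L(z) + conj(P(z))), Im(L(z) + conj(P(z))), h(z)) is a conformal spacelike minimal immersion into the Lorentz-Minkowski space L³ with metric dx₁² + dx₂² − dx₃². -/

import Mathlib

/-- Partial derivative in the `u` (real) direction of a real function on `ℂ`. -/
noncomputable def pu (F : ℂ → ℝ) (z : ℂ) : ℝ := fderiv ℝ F z 1
/-- Partial derivative in the `v` (imaginary) direction of a real function on `ℂ`. -/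
noncomputable def pv (F : ℂ → ℝ) (z : ℂ) : ℝ := fderiv ℝ F z Complex.I
/-- Wirtinger derivative `F_z = (1/2)(F_u - i F_v)` of a real function on `ℂ`. -/
noncomputable def wirt (F : ℂ → ℝ) (z : ℂ) : ℂ :=
  (1 / 2 : ℂ) * ((pu F z : ℂ) - Complex.I * (pv F z : ℂ))
/-- Laplacian `F_uu + F_vv` of a real function on `ℂ`. -/
noncomputable def lap (F : ℂ → ℝ) (z : ℂ) : ℝ := pu (pu F) z + pv (pv F) z
/-- The Lorentz-Minkowski metric `g = dx₁² + dx₂² - dx₃²` on `ℝ³`. -/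
def mink (x y : ℝ × ℝ × ℝ) : ℝ := x.1 * y.1 + x.2.1 * y.2.1 - x.2.2 * y.2.2

lemma fderiv_re_apply {F : ℂ → ℂ} {z : ℂ} (hF : DifferentiableAt ℝ F z) (t : ℂ) :
    fderiv ℝ (fun w => (F w).re) z t = (fderiv ℝ F z t).re := by
  have h := (Complex.reCLM.hasFDerivAt.comp z hF.hasFDerivAt).fderiv
  have h2 : fderiv ℝ (fun w => (F w).re) z = (Complex.reCLM).comp (fderiv ℝ F z) := h
  rw [h2]; rfl

lemma fderiv_im_apply {F : ℂ → ℂ} {z : ℂ} (hF : DifferentiableAt ℝ F z) (t : ℂ) :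
    fderiv ℝ (fun w => (F w).im) z t = (fderiv ℝ F z t).im := by
  have h := (Complex.imCLM.hasFDerivAt.comp z hF.hasFDerivAt).fderiv
  have h2 : fderiv ℝ (fun w => (F w).im) z = (Complex.imCLM).comp (fderiv ℝ F z) := h
  rw [h2]; rfl

lemma fderiv_LconjP {L P : ℂ → ℂ} {z : ℂ} (hL : DifferentiableAt ℂ L z)
    (hP : DifferentiableAt ℂ P z) (t : ℂ) :
    fderiv ℝ (fun w => L w + (starRingEnd ℂ) (P w)) z t
      = deriv L z * t + (starRingEnd ℂ) (deriv P z * t) := by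
  have hL' : HasFDerivAt L (((1 : ℂ →L[ℂ] ℂ).smulRight (deriv L z)).restrictScalars ℝ) z :=
    (hL.hasDerivAt.hasFDerivAt).restrictScalars ℝ
  have hP' : HasFDerivAt P (((1 : ℂ →L[ℂ] ℂ).smulRight (deriv P z)).restrictScalars ℝ) z :=
    (hP.hasDerivAt.hasFDerivAt).restrictScalars ℝ
  have hPc : HasFDerivAt (fun w => (starRingEnd ℂ) (P w))
      ((Complex.conjCLE.toContinuousLinearMap).comp
        (((1 : ℂ →L[ℂ] ℂ).smulRight (deriv P z)).restrictScalars ℝ)) z :=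
    Complex.conjCLE.toContinuousLinearMap.hasFDerivAt.comp z hP'
  have h := (hL'.add hPc).fderiv
  rw [show (fun w => L w + (starRingEnd ℂ) (P w)) = (L + fun w => (starRingEnd ℂ) (P w)) from rfl, h]
  simp [mul_comm]

lemma diffat_LconjP {L P : ℂ → ℂ} {z : ℂ} (hL : DifferentiableAt ℂ L z)
    (hP : DifferentiableAt ℂ P z) :
    DifferentiableAt ℝ (fun w => L w + (starRingEnd ℂ) (P w)) z :=
  (hL.restrictScalars ℝ).add
    (Complex.conjCLE.differentiable.differentiableAt.comp z (hP.restrictScalars ℝ))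

lemma lap_LconjP (Ω : Set ℂ) (hΩ : IsOpen Ω) {L P : ℂ → ℂ}
    (hL : DifferentiableOn ℂ L Ω) (hP : DifferentiableOn ℂ P Ω) {z : ℂ} (hz : z ∈ Ω) :
    lap (fun w => (L w + (starRingEnd ℂ) (P w)).re) z = 0 ∧
    lap (fun w => (L w + (starRingEnd ℂ) (P w)).im) z = 0 := by
  have hLa := (hL.analyticOnNhd hΩ).deriv
  have hPa := (hP.analyticOnNhd hΩ).deriv
  have hL1 : ∀ w ∈ Ω, DifferentiableAt ℂ L w := fun w hw => hL.differentiableAt (hΩ.mem_nhds hw)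
  have hP1 : ∀ w ∈ Ω, DifferentiableAt ℂ P w := fun w hw => hP.differentiableAt (hΩ.mem_nhds hw)
  have hL2 : ∀ w ∈ Ω, DifferentiableAt ℂ (deriv L) w := fun w hw => (hLa w hw).differentiableAt
  have hP2 : ∀ w ∈ Ω, DifferentiableAt ℂ (deriv P) w := fun w hw => (hPa w hw).differentiableAt
  have memΩ : Ω ∈ nhds z := hΩ.mem_nhds hz
  set L₂ : ℂ → ℂ := fun w => deriv L w * Complex.I with hL₂def
  set P₂ : ℂ → ℂ := fun w => deriv P w * Complex.I with hP₂def
  have hL₂ : ∀ w ∈ Ω, DifferentiableAt ℂ L₂ w := fun w hw => (hL2 w hw).mul_const _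
  have hP₂ : ∀ w ∈ Ω, DifferentiableAt ℂ P₂ w := fun w hw => (hP2 w hw).mul_const _
  have hdL₂ : deriv L₂ z = deriv (deriv L) z * Complex.I := deriv_mul_const (hL2 z hz) _
  have hdP₂ : deriv P₂ z = deriv (deriv P) z * Complex.I := deriv_mul_const (hP2 z hz) _
  -- eventual equalities for first derivatives
  have epu_re : pu (fun w => (L w + (starRingEnd ℂ) (P w)).re)
      =ᶠ[nhds z] fun w => (deriv L w * 1 + (starRingEnd ℂ) (deriv P w * 1)).re := by
    filter_upwards [memΩ] with w hw
    rw [pu, fderiv_re_apply (diffat_LconjP (hL1 w hw) (hP1 w hw)),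
        fderiv_LconjP (hL1 w hw) (hP1 w hw)]
  have epv_re : pv (fun w => (L w + (starRingEnd ℂ) (P w)).re)
      =ᶠ[nhds z] fun w => (L₂ w + (starRingEnd ℂ) (P₂ w)).re := by
    filter_upwards [memΩ] with w hw
    rw [pv, fderiv_re_apply (diffat_LconjP (hL1 w hw) (hP1 w hw)),
        fderiv_LconjP (hL1 w hw) (hP1 w hw)]
  have epu_im : pu (fun w => (L w + (starRingEnd ℂ) (P w)).im)
      =ᶠ[nhds z] fun w => (deriv L w * 1 + (starRingEnd ℂ) (deriv P w * 1)).im := by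
    filter_upwards [memΩ] with w hw
    rw [pu, fderiv_im_apply (diffat_LconjP (hL1 w hw) (hP1 w hw)),
        fderiv_LconjP (hL1 w hw) (hP1 w hw)]
  have epv_im : pv (fun w => (L w + (starRingEnd ℂ) (P w)).im)
      =ᶠ[nhds z] fun w => (L₂ w + (starRingEnd ℂ) (P₂ w)).im := by
    filter_upwards [memΩ] with w hw
    rw [pv, fderiv_im_apply (diffat_LconjP (hL1 w hw) (hP1 w hw)),
        fderiv_LconjP (hL1 w hw) (hP1 w hw)]
  have hmul1 : ∀ w ∈ Ω, DifferentiableAt ℂ (fun w => deriv L w * 1) w := fun w hw =>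
    (hL2 w hw).mul_const _
  have hmul1P : ∀ w ∈ Ω, DifferentiableAt ℂ (fun w => deriv P w * 1) w := fun w hw =>
    (hP2 w hw).mul_const _
  have hdmul1 : deriv (fun w => deriv L w * 1) z = deriv (deriv L) z * 1 :=
    deriv_mul_const (hL2 z hz) _
  have hdmul1P : deriv (fun w => deriv P w * 1) z = deriv (deriv P) z * 1 :=
    deriv_mul_const (hP2 z hz) _
  constructor
  · rw [lap, pu, pv, epu_re.fderiv_eq, epv_re.fderiv_eq,
      fderiv_re_apply (diffat_LconjP (hmul1 z hz) (hmul1P z hz)),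
      fderiv_re_apply (diffat_LconjP (hL₂ z hz) (hP₂ z hz)),
      fderiv_LconjP (hmul1 z hz) (hmul1P z hz), fderiv_LconjP (hL₂ z hz) (hP₂ z hz),
      hdmul1, hdmul1P, hdL₂, hdP₂]
    simp [mul_assoc, Complex.I_mul_I]
    ring
  · rw [lap, pu, pv, epu_im.fderiv_eq, epv_im.fderiv_eq,
      fderiv_im_apply (diffat_LconjP (hmul1 z hz) (hmul1P z hz)),
      fderiv_im_apply (diffat_LconjP (hL₂ z hz) (hP₂ z hz)),
      fderiv_LconjP (hmul1 z hz) (hmul1P z hz), fderiv_LconjP (hL₂ z hz) (hP₂ z hz),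
      hdmul1, hdmul1P, hdL₂, hdP₂]
    simp [mul_assoc, Complex.I_mul_I]
    ring

set_option maxHeartbeats 2000000 in
/-- Enneper-type representation of spacelike minimal surfaces in `𝕃³`.
If `h : Ω → ℝ` is harmonic on a simply connected domain `Ω ⊂ ℂ` and `L, P : Ω → ℂ` are
holomorphic with `(h_z)² = L_z P_z` and `|L_z| - |P_z| ≠ 0` on `Ω`, then
`ψ = (Re(L + conj P), Im(L + conj P), h)` is a conformal spacelike minimal immersion into
`𝕃³ = (ℝ³, dx₁² + dx₂² - dx₃²)`. -/
theorem enneper_spacelike (Ω : Set ℂ) (hΩ : IsOpen Ω) (hconn : IsConnected Ω)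
    (hsc : SimplyConnectedSpace Ω)
    (h : ℂ → ℝ) (hC2 : ContDiffOn ℝ 2 h Ω) (hharm : ∀ z ∈ Ω, lap h z = 0)
    (L P : ℂ → ℂ) (hL : DifferentiableOn ℂ L Ω) (hP : DifferentiableOn ℂ P Ω)
    (hdata : ∀ z ∈ Ω, (wirt h z) ^ 2 = deriv L z * deriv P z)
    (hnd : ∀ z ∈ Ω, ‖deriv L z‖ ≠ ‖deriv P z‖) :
    ∀ z ∈ Ω,
      let ψ₁ : ℂ → ℝ := fun w => (L w + (starRingEnd ℂ) (P w)).re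
      let ψ₂ : ℂ → ℝ := fun w => (L w + (starRingEnd ℂ) (P w)).im
      let ψ₃ : ℂ → ℝ := h
      let Ψu : ℝ × ℝ × ℝ := (pu ψ₁ z, pu ψ₂ z, pu ψ₃ z)
      let Ψv : ℝ × ℝ × ℝ := (pv ψ₁ z, pv ψ₂ z, pv ψ₃ z)
      -- conformal
      mink Ψu Ψu = mink Ψv Ψv ∧ mink Ψu Ψv = 0 ∧
      -- spacelike immersion (induced metric is positive definite)
      0 < mink Ψu Ψu ∧
      -- minimal: the coordinate functions are harmonic
      lap ψ₁ z = 0 ∧ lap ψ₂ z = 0 ∧ lap ψ₃ z = 0 := by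
  intro z hz
  have hL1 : DifferentiableAt ℂ L z := hL.differentiableAt (hΩ.mem_nhds hz)
  have hP1 : DifferentiableAt ℂ P z := hP.differentiableAt (hΩ.mem_nhds hz)
  set a := deriv L z with ha
  set b := deriv P z with hb
  set H := wirt h z with hH
  -- first derivative values
  have hψ1u : pu (fun w => (L w + (starRingEnd ℂ) (P w)).re) z = (a + (starRingEnd ℂ) b).re := by
    rw [pu, fderiv_re_apply (diffat_LconjP hL1 hP1), fderiv_LconjP hL1 hP1]; simp; rfl
  have hψ1v : pv (fun w => (L w + (starRingEnd ℂ) (P w)).re) z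
      = (a * Complex.I + (starRingEnd ℂ) (b * Complex.I)).re := by
    rw [pv, fderiv_re_apply (diffat_LconjP hL1 hP1), fderiv_LconjP hL1 hP1]
  have hψ2u : pu (fun w => (L w + (starRingEnd ℂ) (P w)).im) z = (a + (starRingEnd ℂ) b).im := by
    rw [pu, fderiv_im_apply (diffat_LconjP hL1 hP1), fderiv_LconjP hL1 hP1]; simp; rfl
  have hψ2v : pv (fun w => (L w + (starRingEnd ℂ) (P w)).im) z
      = (a * Complex.I + (starRingEnd ℂ) (b * Complex.I)).im := by
    rw [pv, fderiv_im_apply (diffat_LconjP hL1 hP1), fderiv_LconjP hL1 hP1]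
  -- wirtinger components
  have hr : H.re = pu h z / 2 := by simp [hH, wirt]; ring
  have hs : H.im = -(pv h z) / 2 := by simp [hH, wirt]; ring
  have hHu : pu h z = 2 * H.re := by rw [hr]; ring
  have hHv : pv h z = -2 * H.im := by rw [hs]; ring
  -- constraints
  have hsq : H ^ 2 = a * b := hdata z hz
  have hF1 : H.re ^ 2 - H.im ^ 2 = a.re * b.re - a.im * b.im := by
    have := congrArg Complex.re hsq
    simpa [pow_two, Complex.mul_re] using this
  have hF2 : H.re * H.im + H.im * H.re = a.re * b.im + a.im * b.re := by
    have := congrArg Complex.im hsq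
    simpa [pow_two, Complex.mul_im] using this
  have hF3 : H.re ^ 2 + H.im ^ 2 = ‖a‖ * ‖b‖ := by
    have h1 : ‖H‖ ^ 2 = ‖a‖ * ‖b‖ := by
      rw [← norm_pow, hsq, norm_mul]
    rw [← h1, Complex.sq_norm, Complex.normSq_apply]; ring
  have hF4 : ‖a‖ ^ 2 = a.re ^ 2 + a.im ^ 2 := by
    rw [Complex.sq_norm, Complex.normSq_apply]; ring
  have hF5 : ‖b‖ ^ 2 = b.re ^ 2 + b.im ^ 2 := by
    rw [Complex.sq_norm, Complex.normSq_apply]; ring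
  have hne : ‖a‖ ≠ ‖b‖ := hnd z hz
  have hpos : 0 < (‖a‖ - ‖b‖) ^ 2 := by
    have : ‖a‖ - ‖b‖ ≠ 0 := sub_ne_zero.mpr hne
    positivity
  refine ⟨?_, ?_, ?_, ?_, ?_, ?_⟩
  · simp only [mink, hψ1u, hψ1v, hψ2u, hψ2v, hHu, hHv]
    simp [Complex.add_re, Complex.add_im, Complex.mul_re, Complex.mul_im]
    nlinarith [hF1]
  · simp only [mink, hψ1u, hψ1v, hψ2u, hψ2v, hHu, hHv]
    simp [Complex.add_re, Complex.add_im, Complex.mul_re, Complex.mul_im]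
    nlinarith [hF2]
  · simp only [mink, hψ1u, hψ1v, hψ2u, hψ2v, hHu, hHv]
    simp [Complex.add_re, Complex.add_im, Complex.mul_re, Complex.mul_im]
    nlinarith [hF1, hF3, hF4, hF5, hpos]
  · exact (lap_LconjP Ω hΩ hL hP hz).1
  · exact (lap_LconjP Ω hΩ hL hP hz).2
  · exact hharm z hz
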